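/- Under the setup of the previous lemma (C ≥ 2, J ≤ C, random permutation sampling), the exact value of the double sum is ∑_{c=1}^J ∑_{i=0}^{I-1} E[‖I∑_{k=1}^{c-1}(X_{ψ_k}-x̄) + i(X_{ψ_c}-x̄)‖²] = ν² [ (1/2) J I² (JI - 1) - (1/6) J I (I² - 1) - (1/(C-1)) (J-1) J I² ( (1/6)(2J-1) I - 1/2 ) ]. -/

import Mathlib

/-!
With `y k = x k - x̄`, the vector inside the norm is `∑ k, a k • y (ψ k)` for the weights
`a = (I, …, I, i, 0, …, 0)` (`c - 1` copies of `I`). Averaging over `ψ` only involves the second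
moments of a uniform permutation: `E ‖y (ψ k)‖² = ν²`, and, because `∑ y = 0`,
`E ⟪y (ψ k), y (ψ l)⟫ = -ν² / (C - 1)` for `k ≠ l`. Hence each expectation equals
`ν² (∑ a² - ((∑ a)² - ∑ a²) / (C - 1))`, a polynomial in `c` and `i` that is summed in
closed form.
-/

open Finset
open scoped Nat RealInnerProductSpace

theorem sum_sub_inv_card_smul_sum {ι 𝕜 E : Type*} [Fintype ι] [Nonempty ι] [DivisionRing 𝕜]
    [CharZero 𝕜] [AddCommGroup E] [Module 𝕜 E] (x : ι → E) :
    ∑ j, (x j - (Fintype.card ι : 𝕜)⁻¹ • ∑ j, x j) = 0 := by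
  rw [sum_sub_distrib, sum_const, card_univ, ← Nat.cast_smul_eq_nsmul 𝕜, smul_smul,
    mul_inv_cancel₀ (Nat.cast_ne_zero.mpr Fintype.card_ne_zero), one_smul, sub_self]

theorem norm_sum_smul_sq {ι E : Type*} [NormedAddCommGroup E] [InnerProductSpace ℝ E]
    (s : Finset ι) (a : ι → ℝ) (v : ι → E) :
    ‖∑ k ∈ s, a k • v k‖ ^ 2 = ∑ k ∈ s, ∑ l ∈ s, a k * a l * ⟪v k, v l⟫ := by
  simp_rw [← real_inner_self_eq_norm_sq, sum_inner, inner_sum, real_inner_smul_left,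
    real_inner_smul_right, mul_assoc]

theorem sum_sum_mul_mul_ite_eq {ι : Type*} [Fintype ι] [DecidableEq ι] (a : ι → ℝ) (r : ℝ) :
    ∑ k, ∑ l, a k * a l * (if l = k then 1 else -r)
      = ∑ k, a k ^ 2 - r * ((∑ k, a k) ^ 2 - ∑ k, a k ^ 2) := by
  have h (k l : ι) : (if l = k then (1 : ℝ) else -r) = -r + if l = k then 1 + r else 0 := by
    split_ifs <;> ring
  simp_rw [h, mul_add, sum_add_distrib, mul_ite, mul_zero, sum_ite_eq', mem_univ, if_true,
    ← sum_mul, ← sum_mul_sum]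
  simp only [sq]
  ring

namespace Equiv.Perm

variable {ι M : Type*} [Fintype ι] [DecidableEq ι] [AddCommMonoid M]

theorem sum_comp_apply_eq (f : ι → M) (k k' : ι) :
    ∑ σ : Perm ι, f (σ k) = ∑ σ : Perm ι, f (σ k') := by
  simpa [mul_apply] using Equiv.sum_comp (Equiv.mulRight (swap k k')) fun σ : Perm ι => f (σ k')

theorem sum_comp_apply₂_eq (f : ι → ι → M) {k l l' : ι} (hl : l ≠ k) (hl' : l' ≠ k) :
    ∑ σ : Perm ι, f (σ k) (σ l) = ∑ σ : Perm ι, f (σ k) (σ l') := by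
  simpa [mul_apply, swap_apply_of_ne_of_ne hl.symm hl'.symm] using
    Equiv.sum_comp (Equiv.mulRight (swap l l')) fun σ : Perm ι => f (σ k) (σ l')

theorem card_smul_sum_comp_apply (f : ι → M) (k : ι) :
    Fintype.card ι • ∑ σ : Perm ι, f (σ k) = (Fintype.card ι)! • ∑ j, f j := by
  calc Fintype.card ι • ∑ σ : Perm ι, f (σ k)
      = ∑ k' : ι, ∑ σ : Perm ι, f (σ k') := by
        simp [sum_comp_apply_eq f _ k]
    _ = ∑ σ : Perm ι, ∑ j, f j := by
        rw [sum_comm]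
        exact sum_congr rfl fun σ _ => Equiv.sum_comp σ f
    _ = (Fintype.card ι)! • ∑ j, f j := by simp [Fintype.card_perm]

theorem card_erase_smul_sum_comp_apply₂ (f : ι → ι → M) {k l : ι} (hl : l ≠ k) :
    #(univ.erase k) • ∑ σ : Perm ι, f (σ k) (σ l)
      = ∑ σ : Perm ι, ∑ l' ∈ univ.erase k, f (σ k) (σ l') := by
  rw [sum_comm, ← sum_const]
  exact sum_congr rfl fun l' hl' => sum_comp_apply₂_eq f hl (ne_of_mem_erase hl')

theorem card_mul_sum_comp_apply (f : ι → ℝ) (k : ι) :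
    (Fintype.card ι : ℝ) * ∑ σ : Perm ι, f (σ k) = (Fintype.card ι)! * ∑ j, f j := by
  simpa only [nsmul_eq_mul] using card_smul_sum_comp_apply f k

variable {E : Type*} [NormedAddCommGroup E] [InnerProductSpace ℝ E]

theorem card_mul_card_sub_one_mul_sum_inner_apply {y : ι → E} (hy : ∑ j, y j = 0) {k l : ι}
    (hl : l ≠ k) :
    (Fintype.card ι : ℝ) * (Fintype.card ι - 1) * ∑ σ : Perm ι, ⟪y (σ k), y (σ l)⟫
      = -((Fintype.card ι)! * ∑ j, ‖y j‖ ^ 2) := by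
  have hrow (σ : Perm ι) : ∑ l' ∈ univ.erase k, ⟪y (σ k), y (σ l')⟫ = -‖y (σ k)‖ ^ 2 := by
    rw [← inner_sum, sum_erase_eq_sub (mem_univ k), Equiv.sum_comp σ y, hy, zero_sub,
      inner_neg_right, real_inner_self_eq_norm_sq]
  have h := card_erase_smul_sum_comp_apply₂ (fun i j => ⟪y i, y j⟫) hl
  rw [card_erase_of_mem (mem_univ k), card_univ, nsmul_eq_mul,
    Nat.cast_pred (Fintype.card_pos_iff.mpr ⟨k⟩)] at h
  simp only [hrow, sum_neg_distrib] at h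
  rw [mul_assoc, h, mul_neg, card_mul_sum_comp_apply fun j => ‖y j‖ ^ 2]

theorem sum_inner_apply {y : ι → E} (hn : 2 ≤ Fintype.card ι) (hy : ∑ j, y j = 0) (k l : ι) :
    ∑ σ : Perm ι, ⟪y (σ k), y (σ l)⟫
      = (Fintype.card ι)! * ((Fintype.card ι : ℝ)⁻¹ * ∑ j, ‖y j‖ ^ 2)
          * if l = k then 1 else -(Fintype.card ι - 1 : ℝ)⁻¹ := by
  have hn₁ : (Fintype.card ι : ℝ) - 1 ≠ 0 := by
    have : (2 : ℝ) ≤ Fintype.card ι := by exact_mod_cast hn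
    linarith
  split_ifs with hlk
  · subst hlk
    have h := card_mul_sum_comp_apply (fun j => ‖y j‖ ^ 2) l
    simp only [real_inner_self_eq_norm_sq]
    field_simp
    linarith
  · have h := card_mul_card_sub_one_mul_sum_inner_apply hy hlk
    field_simp
    linarith

theorem inv_factorial_mul_sum_norm_sum_smul_apply_sq {y : ι → E} (hn : 2 ≤ Fintype.card ι)
    (hy : ∑ j, y j = 0) (a : ι → ℝ) :
    ((Fintype.card ι)! : ℝ)⁻¹ * ∑ σ : Perm ι, ‖∑ k, a k • y (σ k)‖ ^ 2
      = ((Fintype.card ι : ℝ)⁻¹ * ∑ j, ‖y j‖ ^ 2)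
          * (∑ k, a k ^ 2 - ((∑ k, a k) ^ 2 - ∑ k, a k ^ 2) / (Fintype.card ι - 1)) := by
  set ν := (Fintype.card ι : ℝ)⁻¹ * ∑ j, ‖y j‖ ^ 2 with hν
  calc ((Fintype.card ι)! : ℝ)⁻¹ * ∑ σ : Perm ι, ‖∑ k, a k • y (σ k)‖ ^ 2
      = ((Fintype.card ι)! : ℝ)⁻¹ * ∑ k, ∑ l, a k * a l * ∑ σ : Perm ι, ⟪y (σ k), y (σ l)⟫ := by
        congr 1
        simp_rw [norm_sum_smul_sq, mul_sum]
        rw [sum_comm]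
        exact sum_congr rfl fun k _ => sum_comm
    _ = ν * ∑ k, ∑ l, a k * a l * (if l = k then 1 else -(Fintype.card ι - 1 : ℝ)⁻¹) := by
        simp_rw [sum_inner_apply hn hy, ← hν, mul_sum]
        congr! 2 with k _ l _
        field_simp
    _ = _ := by rw [sum_sum_mul_mul_ite_eq, div_eq_inv_mul]

end Equiv.Perm

section Weights

variable {n : ℕ} {R : Type*}

def prefixWeight [Zero R] (m : ℕ) (u w : R) (k : Fin n) : R :=
  if (k : ℕ) < m then u else if (k : ℕ) = m then w else 0

theorem apply_prefixWeight [Zero R] {S : Type*} [Zero S] (f : R → S) (hf : f 0 = 0) (m : ℕ)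
    (u w : R) (k : Fin n) : f (prefixWeight m u w k) = prefixWeight m (f u) (f w) k := by
  unfold prefixWeight
  split_ifs <;> first | rfl | exact hf

variable [Semiring R]

theorem sum_prefixWeight_smul {M : Type*} [AddCommMonoid M] [Module R M] {m : ℕ} (hm : m < n)
    (u w : R) (v : Fin n → M) :
    ∑ k, prefixWeight m u w k • v k
      = u • ∑ k ∈ univ.filter (fun k : Fin n => (k : ℕ) < m), v k + w • v ⟨m, hm⟩ := by
  have h (k : Fin n) : prefixWeight m u w k • v k
      = (if (k : ℕ) < m then u • v k else 0) + if k = ⟨m, hm⟩ then w • v k else 0 := by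
    unfold prefixWeight
    split_ifs <;> simp_all [Fin.ext_iff]
  simp_rw [h]
  rw [sum_add_distrib, ← sum_filter, Fintype.sum_ite_eq', smul_sum]

theorem sum_prefixWeight {m : ℕ} (hm : m < n) (u w : R) :
    ∑ k : Fin n, prefixWeight m u w k = m * u + w := by
  rw [Nat.cast_comm]
  simpa [Fin.card_filter_val_lt, hm.le, nsmul_eq_mul] using
    sum_prefixWeight_smul hm u w (1 : Fin n → R)

end Weights

theorem sum_attach_Icc_one_comp_sub_one {M : Type*} [AddCommMonoid M] (J : ℕ) (g : ℕ → M) :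
    ∑ c ∈ (Icc 1 J).attach, g (c.1 - 1) = ∑ m ∈ range J, g m := by
  rw [sum_attach (Icc 1 J) fun n => g (n - 1), ← Ico_add_one_right_eq_Icc, sum_Ico_eq_sum_range]
  simp only [add_tsub_cancel_left, add_tsub_cancel_right]

theorem sum_range_sampling_variance (m I n : ℕ) (q : ℝ) :
    ∑ i ∈ range n, (((m : ℝ) * I ^ 2 + (i : ℝ) ^ 2)
        - (((m : ℝ) * I + i) ^ 2 - ((m : ℝ) * I ^ 2 + (i : ℝ) ^ 2)) / q)
      = n * m * I ^ 2 + n * (n - 1) * (2 * n - 1) / 6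
        - (n * m ^ 2 * I ^ 2 + m * I * n * (n - 1) - n * m * I ^ 2) / q := by
  induction n with
  | zero => simp
  | succ n ih => rw [sum_range_succ, ih]; push_cast; ring

theorem sum_range_sum_range_sampling_variance (I J : ℕ) (q : ℝ) :
    ∑ m ∈ range J, ∑ i ∈ range I, (((m : ℝ) * I ^ 2 + (i : ℝ) ^ 2)
        - (((m : ℝ) * I + i) ^ 2 - ((m : ℝ) * I ^ 2 + (i : ℝ) ^ 2)) / q)
      = (1 / 2 : ℝ) * J * I ^ 2 * ((J : ℝ) * I - 1) - (1 / 6) * J * I * ((I : ℝ) ^ 2 - 1)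
        - (1 / q) * ((J : ℝ) - 1) * J * I ^ 2 * ((1 / 6) * (2 * (J : ℝ) - 1) * I - 1 / 2) := by
  induction J with
  | zero => simp
  | succ J ih => rw [sum_range_succ, ih, sum_range_sampling_variance]; push_cast; ring

/-- Exact value of the double sum in the sequential partial participation lemma:
∑_{c=1}^J ∑_{i=0}^{I-1} E‖I∑_{k=1}^{c-1}(X_{ψ_k}-x̄) + i(X_{ψ_c}-x̄)‖²
  = ν²[(1/2)JI²(JI-1) - (1/6)JI(I²-1) - (1/(C-1))(J-1)JI²((1/6)(2J-1)I - 1/2)]. -/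
theorem stmt_13 {d C J I : ℕ} (hC : 2 ≤ C) (hJC : J ≤ C)
    (x : Fin C → EuclideanSpace ℝ (Fin d)) :
    ∑ c ∈ (Finset.Icc 1 J).attach, ∑ i ∈ Finset.range I,
        ((Nat.factorial C : ℝ))⁻¹ *
          (∑ ψ : Equiv.Perm (Fin C),
            ‖(I : ℝ) • (∑ k ∈ Finset.univ.filter (fun k : Fin C => (k : ℕ) < c.1 - 1),
                  (x (ψ k) - (C : ℝ)⁻¹ • ∑ j, x j))
              + (i : ℝ) • (x (ψ ⟨c.1 - 1, by
                    have hmem := Finset.mem_Icc.mp c.2; omega⟩)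
                  - (C : ℝ)⁻¹ • ∑ j, x j)‖ ^ 2)
      = ((C : ℝ)⁻¹ * ∑ k, ‖x k - (C : ℝ)⁻¹ • ∑ j, x j‖ ^ 2)
          * ((1 / 2 : ℝ) * J * I ^ 2 * ((J : ℝ) * I - 1)
            - (1 / 6) * J * I * ((I : ℝ) ^ 2 - 1)
            - (1 / ((C : ℝ) - 1)) * ((J : ℝ) - 1) * J * I ^ 2
                * ((1 / 6) * (2 * (J : ℝ) - 1) * I - 1 / 2)) := by
  set xbar := (C : ℝ)⁻¹ • ∑ j, x j
  have : Nonempty (Fin C) := ⟨⟨0, by omega⟩⟩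
  have hy : ∑ j, (x j - xbar) = 0 := by simpa using sum_sub_inv_card_smul_sum (𝕜 := ℝ) x
  have hperm := Equiv.Perm.inv_factorial_mul_sum_norm_sum_smul_apply_sq (by simpa using hC) hy
  simp only [Fintype.card_fin] at hperm
  set ν := (C : ℝ)⁻¹ * ∑ k, ‖x k - xbar‖ ^ 2
  let G (m : ℕ) : ℝ := ∑ i ∈ range I, ν * (((m : ℝ) * I ^ 2 + (i : ℝ) ^ 2)
    - (((m : ℝ) * I + i) ^ 2 - ((m : ℝ) * I ^ 2 + (i : ℝ) ^ 2)) / ((C : ℝ) - 1))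
  calc _ = ∑ c ∈ (Icc 1 J).attach, G (c.1 - 1) := by
        refine sum_congr rfl fun c _ => sum_congr rfl fun i _ => ?_
        have hm : c.1 - 1 < C := by have := mem_Icc.mp c.2; omega
        simp only [← sum_prefixWeight_smul hm, hperm, sum_prefixWeight hm,
          apply_prefixWeight (· ^ 2) (zero_pow two_ne_zero)]
    _ = ∑ m ∈ range J, G m := sum_attach_Icc_one_comp_sub_one J G
    _ = _ := by simp only [G, ← mul_sum, sum_range_sum_range_sampling_variance]
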